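/- arXiv:2312.01394 — 7 statements merged into one kernel-verified Lean document; each statement's English description precedes it below -/
import Mathlib

section
/- The utility function of the hiders' game exhibits strategic complementarity with respect to edge addition: for any player i, any edge sets E ⊂ E' and any edge set F disjoint from E', we have u_i(E' ∪ F) − u_i(E') ≥ u_i(E ∪ F) − u_i(E). -/
open Finset

variable {V : Type*} [Fintype V] [DecidableEq V]

/-- The neighbourhood of `i` in the edge set `E`. -/
def nbhd (E : Finset (Sym2 V)) (i : V) : Finset V :=
  Finset.univ.filter fun j => j ≠ i ∧ s(i, j) ∈ E

/-- The degree of `v` in the edge set `E`. -/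
def deg (E : Finset (Sym2 V)) (v : V) : ℕ :=
  (nbhd E v).card

/-- The utility of player `i` with visibility-aversion `α i` on edge set `E`:
the sum of the degrees of `i`'s neighbours minus `α i` times `i`'s own degree. -/
noncomputable def util (α : V → ℝ) (E : Finset (Sym2 V)) (i : V) : ℝ :=
  (∑ j ∈ nbhd E i, (deg E j : ℝ)) - α i * (deg E i : ℝ)

lemma nbhd_union (E F : Finset (Sym2 V)) (i : V) :
    nbhd (E ∪ F) i = nbhd E i ∪ nbhd F i := by
  ext j; simp [nbhd]; tauto

lemma nbhd_disjoint {E F : Finset (Sym2 V)} (h : Disjoint E F) (i : V) :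
    Disjoint (nbhd E i) (nbhd F i) := by
  simp only [Finset.disjoint_left, nbhd, Finset.mem_filter]
  rintro j ⟨-, -, hE⟩ ⟨-, -, hF⟩
  exact Finset.disjoint_left.mp h hE hF

lemma deg_union {E F : Finset (Sym2 V)} (h : Disjoint E F) (v : V) :
    deg (E ∪ F) v = deg E v + deg F v := by
  unfold deg
  rw [nbhd_union, Finset.card_union_of_disjoint (nbhd_disjoint h v)]

lemma nbhd_mono {E E' : Finset (Sym2 V)} (h : E ⊆ E') (i : V) :
    nbhd E i ⊆ nbhd E' i := by
  intro j; simp only [nbhd, Finset.mem_filter]; tauto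

lemma deg_mono {E E' : Finset (Sym2 V)} (h : E ⊆ E') (v : V) :
    deg E v ≤ deg E' v :=
  Finset.card_le_card (nbhd_mono h v)

/-- Strategic complementarity of the utility w.r.t. edge addition. -/
theorem strategic_complementarity (N : Finset V) (α : V → ℝ)
    (hα : ∀ i ∈ N, 0 ≤ α i) (i : V) (hi : i ∈ N)
    (E E' F : Finset (Sym2 V)) (hEE' : E ⊂ E') (hdisj : F ∩ E' = ∅) :
    util α (E ∪ F) i - util α E i ≤ util α (E' ∪ F) i - util α E' i := by
  have hFE' : Disjoint E' F := (Finset.disjoint_iff_inter_eq_empty.mpr hdisj).symm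
  have hFE : Disjoint E F := hFE'.mono_left hEE'.subset
  have key1 : ∑ j ∈ nbhd E i, (deg F j : ℝ) ≤ ∑ j ∈ nbhd E' i, (deg F j : ℝ) :=
    Finset.sum_le_sum_of_subset_of_nonneg (nbhd_mono hEE'.subset i)
      (fun j _ _ => by positivity)
  have key2 : ∑ j ∈ nbhd F i, (deg E j : ℝ) ≤ ∑ j ∈ nbhd F i, (deg E' j : ℝ) :=
    Finset.sum_le_sum fun j _ => by exact_mod_cast deg_mono hEE'.subset j
  unfold util
  rw [nbhd_union E F i, nbhd_union E' F i,
    Finset.sum_union (nbhd_disjoint hFE i), Finset.sum_union (nbhd_disjoint hFE' i)]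
  simp only [deg_union hFE, deg_union hFE', Nat.cast_add, Finset.sum_add_distrib]
  push_cast
  ring_nf
  nlinarith [key1, key2]
end

section
/- If a player cannot strictly increase her utility by deleting any single one of her incident edges, then she cannot strictly increase her utility by deleting any subset of her incident edges: if u_i(E \ {e}) ≤ u_i(E) for every edge e incident to i, then u_i(E \ F) ≤ u_i(E) for every set F of edges incident to i. -/
open Finset

variable {V : Type*} [Fintype V] [DecidableEq V]

lemma key (α : V → ℝ) (i : V) (E F : Finset (Sym2 V)) (hF : ∀ e ∈ F, i ∈ e) :
    util α E i - util α (E \ F) i =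
      ∑ j ∈ (nbhd E i).filter (fun j => s(i, j) ∈ F), ((deg E j : ℝ) - α i) := by
  classical
  have hnb : nbhd (E \ F) i = (nbhd E i).filter (fun j => s(i, j) ∉ F) := by
    ext j
    simp only [nbhd, Finset.mem_filter, Finset.mem_univ, true_and, Finset.mem_sdiff]
    tauto
  have hdeg : ∀ j ∈ (nbhd E i).filter (fun j => s(i, j) ∉ F), deg (E \ F) j = deg E j := by
    intro j hj
    simp only [Finset.mem_filter, nbhd, Finset.mem_univ, true_and] at hj
    obtain ⟨⟨hji, hjE⟩, hjF⟩ := hj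
    unfold deg
    congr 1
    ext k
    simp only [nbhd, Finset.mem_filter, Finset.mem_univ, true_and, Finset.mem_sdiff]
    constructor
    · rintro ⟨hkj, hkE, -⟩; exact ⟨hkj, hkE⟩
    · rintro ⟨hkj, hkE⟩
      refine ⟨hkj, hkE, fun hmem => ?_⟩
      have hik := hF _ hmem
      rw [Sym2.mem_iff] at hik
      rcases hik with h | h
      · exact hji h.symm
      · subst h
        exact hjF (by rwa [Sym2.eq_swap] at hmem)
  have hsum : ∑ j ∈ nbhd (E \ F) i, (deg (E \ F) j : ℝ)
      = ∑ j ∈ (nbhd E i).filter (fun j => s(i, j) ∉ F), (deg E j : ℝ) := by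
    rw [hnb]
    exact Finset.sum_congr rfl (fun j hj => by rw [hdeg j hj])
  have hsplit : ∑ j ∈ (nbhd E i).filter (fun j => s(i, j) ∈ F), (deg E j : ℝ)
      + ∑ j ∈ (nbhd E i).filter (fun j => s(i, j) ∉ F), (deg E j : ℝ)
      = ∑ j ∈ nbhd E i, (deg E j : ℝ) :=
    Finset.sum_filter_add_sum_filter_not _ _ _
  have hcard : ((nbhd E i).filter (fun j => s(i, j) ∈ F)).card
      + ((nbhd E i).filter (fun j => s(i, j) ∉ F)).card = (nbhd E i).card :=
    Finset.card_filter_add_card_filter_not _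
  have hdi : (deg (E \ F) i : ℝ) = ((nbhd E i).filter (fun j => s(i, j) ∉ F)).card := by
    rw [deg, hnb]
  have hdi2 : (deg E i : ℝ)
      = ((nbhd E i).filter (fun j => s(i, j) ∈ F)).card
        + ((nbhd E i).filter (fun j => s(i, j) ∉ F)).card := by
    rw [deg, ← hcard]; push_cast; ring
  rw [util, util, hsum, hdi, hdi2, ← hsplit, Finset.sum_sub_distrib, Finset.sum_const,
    nsmul_eq_mul]
  ring

/-- If no single incident-edge deletion strictly profits player `i`, then no deletion
of a set of her incident edges does. -/
theorem single_deletion_suffices (N : Finset V) (α : V → ℝ)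
    (hα : ∀ i ∈ N, 0 ≤ α i) (i : V) (hi : i ∈ N) (E : Finset (Sym2 V))
    (h1 : ∀ e ∈ E, i ∈ e → util α (E \ {e}) i ≤ util α E i) :
    ∀ F : Finset (Sym2 V), (∀ e ∈ F, i ∈ e) → util α (E \ F) i ≤ util α E i := by
  intro F hF
  have hk := key α i E F hF
  have hterm : ∀ j ∈ (nbhd E i).filter (fun j => s(i, j) ∈ F),
      (0 : ℝ) ≤ (deg E j : ℝ) - α i := by
    intro j hj
    simp only [Finset.mem_filter, nbhd, Finset.mem_univ, true_and] at hj
    obtain ⟨⟨hji, hjE⟩, _⟩ := hj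
    have h1' := h1 (s(i, j)) hjE (by simp)
    have hk1 := key α i E {s(i, j)} (by intro e he; rw [Finset.mem_singleton] at he; subst he; simp)
    have hfs : (nbhd E i).filter (fun k => s(i, k) ∈ ({s(i, j)} : Finset (Sym2 V))) = {j} := by
      ext k
      simp only [Finset.mem_filter, nbhd, Finset.mem_univ, true_and, Finset.mem_singleton,
        Sym2.eq_iff]
      constructor
      · rintro ⟨-, h⟩
        tauto
      · rintro rfl
        simp [hji, hjE]
    rw [hfs, Finset.sum_singleton] at hk1
    linarith
  have := Finset.sum_nonneg hterm
  linarith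
end

section
/- Mixed deviations decompose into pure additions or pure deletions: for edge sets F, G with F ∩ G = ∅, if u_i((E ∪ F) \ G) > u_i(E), then u_i(E ∪ F) > u_i(E) or u_i(E \ G) > u_i(E). -/
open Finset

variable {V : Type*} [Fintype V] [DecidableEq V]

lemma mem_nbhd {E : Finset (Sym2 V)} {i j : V} :
    j ∈ nbhd E i ↔ j ≠ i ∧ s(i, j) ∈ E := by simp [nbhd]

lemma nbhd_sdiff (E G : Finset (Sym2 V)) (i : V) :
    nbhd (E \ G) i = nbhd E i \ nbhd G i := by
  ext j; simp [mem_nbhd]; tauto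

/-- If all edges of `F` are incident to `i`, and `j ≠ i`, then the only possible
neighbour of `j` in `F` is `i`. -/
lemma mem_nbhd_incident {F : Finset (Sym2 V)} {i j k : V}
    (hFi : ∀ e ∈ F, i ∈ e) (hj : j ≠ i) :
    k ∈ nbhd F j ↔ k = i ∧ j ∈ nbhd F i := by
  constructor
  · rintro hk
    rw [mem_nbhd] at hk
    obtain ⟨hkj, hs⟩ := hk
    have hik : i ∈ s(j, k) := hFi _ hs
    rw [Sym2.mem_iff] at hik
    have hki : k = i := by
      rcases hik with h1 | h2
      · exact absurd h1.symm hj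
      · exact h2.symm
    subst hki
    exact ⟨rfl, mem_nbhd.mpr ⟨hj, by rwa [Sym2.eq_swap]⟩⟩
  · rintro ⟨rfl, hji⟩
    rw [mem_nbhd] at hji ⊢
    exact ⟨fun hh => hj hh.symm, by rw [Sym2.eq_swap]; exact hji.2⟩

lemma nbhd_incident_of_mem {F : Finset (Sym2 V)} {i j : V}
    (hFi : ∀ e ∈ F, i ∈ e) (hj : j ≠ i) (hjm : j ∈ nbhd F i) :
    nbhd F j = {i} := by
  ext k
  rw [mem_nbhd_incident hFi hj, Finset.mem_singleton]
  exact ⟨fun h => h.1, fun h => ⟨h, hjm⟩⟩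

lemma nbhd_incident_of_notMem {F : Finset (Sym2 V)} {i j : V}
    (hFi : ∀ e ∈ F, i ∈ e) (hj : j ≠ i) (hjm : j ∉ nbhd F i) :
    nbhd F j = ∅ := by
  ext k
  rw [mem_nbhd_incident hFi hj]
  simp [hjm]

lemma nbhd_disjoint_of_disjoint {E F : Finset (Sym2 V)} {i : V}
    (h : Disjoint E F) : Disjoint (nbhd E i) (nbhd F i) := by
  rw [Finset.disjoint_left]
  intro j hjE hjF
  rw [mem_nbhd] at hjE hjF
  exact (Finset.disjoint_left.mp h) hjE.2 hjF.2

lemma deg_union_of_notMem {E F : Finset (Sym2 V)} {i j : V}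
    (hFi : ∀ e ∈ F, i ∈ e) (hj : j ≠ i) (hjA : j ∉ nbhd F i) :
    deg (E ∪ F) j = deg E j := by
  rw [deg, deg, nbhd_union, nbhd_incident_of_notMem hFi hj hjA, Finset.union_empty]

lemma deg_union_of_mem {E F : Finset (Sym2 V)} {i j : V}
    (hFi : ∀ e ∈ F, i ∈ e) (hdisj : Disjoint E F) (hjA : j ∈ nbhd F i) :
    deg (E ∪ F) j = deg E j + 1 := by
  have hj : j ≠ i := (mem_nbhd.mp hjA).1
  have hnotE : i ∉ nbhd E j := by
    rw [mem_nbhd]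
    rintro ⟨-, hs⟩
    rw [Sym2.eq_swap] at hs
    exact (Finset.disjoint_left.mp hdisj) hs (mem_nbhd.mp hjA).2
  rw [deg, deg, nbhd_union, nbhd_incident_of_mem hFi hj hjA,
    Finset.card_union_of_disjoint (by simpa using hnotE), Finset.card_singleton]

lemma deg_sdiff_of_notMem {E G : Finset (Sym2 V)} {i j : V}
    (hGi : ∀ e ∈ G, i ∈ e) (hj : j ≠ i) (hjB : j ∉ nbhd G i) :
    deg (E \ G) j = deg E j := by
  rw [deg, deg, nbhd_sdiff, nbhd_incident_of_notMem hGi hj hjB, Finset.sdiff_empty]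

lemma deg_sdiff_of_mem {E G : Finset (Sym2 V)} {i j : V}
    (hGi : ∀ e ∈ G, i ∈ e) (hGE : G ⊆ E) (hjB : j ∈ nbhd G i) :
    (deg (E \ G) j : ℝ) = (deg E j : ℝ) - 1 := by
  have hj : j ≠ i := (mem_nbhd.mp hjB).1
  have hiE : i ∈ nbhd E j := by
    rw [mem_nbhd]
    refine ⟨fun hh => hj hh.symm, ?_⟩
    rw [Sym2.eq_swap]
    exact hGE (mem_nbhd.mp hjB).2
  have hsub : ({i} : Finset V) ⊆ nbhd E j := by simpa using hiE
  rw [deg, deg, nbhd_sdiff, nbhd_incident_of_mem hGi hj hjB, Finset.card_sdiff_of_subset hsub]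
  rw [Nat.cast_sub (Finset.card_le_card hsub), Finset.card_singleton, Nat.cast_one]

/-- Utility after a pure addition of edges at `i`. -/
lemma util_union (α : V → ℝ) (E F : Finset (Sym2 V)) (i : V)
    (hFi : ∀ e ∈ F, i ∈ e) (hdisj : Disjoint E F) :
    util α (E ∪ F) i =
      util α E i + (∑ j ∈ nbhd F i, ((deg E j : ℝ) + 1))
        - α i * ((nbhd F i).card : ℝ) := by
  have hNA : Disjoint (nbhd E i) (nbhd F i) := nbhd_disjoint_of_disjoint hdisj
  have hdeg_i : deg (E ∪ F) i = deg E i + (nbhd F i).card := by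
    rw [deg, deg, nbhd_union, Finset.card_union_of_disjoint hNA]
  have hsum : (∑ j ∈ nbhd (E ∪ F) i, (deg (E ∪ F) j : ℝ))
      = (∑ j ∈ nbhd E i, (deg E j : ℝ)) + ∑ j ∈ nbhd F i, ((deg E j : ℝ) + 1) := by
    rw [nbhd_union, Finset.sum_union hNA]
    congr 1
    · refine Finset.sum_congr rfl fun j hj => ?_
      have hji : j ≠ i := (mem_nbhd.mp hj).1
      have hjA : j ∉ nbhd F i := Finset.disjoint_left.mp hNA hj
      rw [deg_union_of_notMem hFi hji hjA]
    · refine Finset.sum_congr rfl fun j hj => ?_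
      rw [deg_union_of_mem hFi hdisj hj]
      push_cast
      ring
  rw [util, util, hsum, hdeg_i]
  push_cast
  ring

/-- Utility after a pure deletion of edges at `i`. -/
lemma util_sdiff (α : V → ℝ) (E G : Finset (Sym2 V)) (i : V)
    (hGi : ∀ e ∈ G, i ∈ e) (hGE : G ⊆ E) :
    util α (E \ G) i =
      util α E i - (∑ j ∈ nbhd G i, (deg E j : ℝ))
        + α i * ((nbhd G i).card : ℝ) := by
  have hBN : nbhd G i ⊆ nbhd E i := by
    intro j hj
    rw [mem_nbhd] at hj ⊢
    exact ⟨hj.1, hGE hj.2⟩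
  have hdeg_i : (deg (E \ G) i : ℝ) = (deg E i : ℝ) - (nbhd G i).card := by
    rw [deg, deg, nbhd_sdiff, Finset.card_sdiff_of_subset hBN,
      Nat.cast_sub (Finset.card_le_card hBN)]
  have hsum : (∑ j ∈ nbhd (E \ G) i, (deg (E \ G) j : ℝ))
      = (∑ j ∈ nbhd E i, (deg E j : ℝ)) - ∑ j ∈ nbhd G i, (deg E j : ℝ) := by
    rw [nbhd_sdiff]
    have h1 : (∑ j ∈ nbhd E i \ nbhd G i, (deg (E \ G) j : ℝ))
        = ∑ j ∈ nbhd E i \ nbhd G i, (deg E j : ℝ) := by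
      refine Finset.sum_congr rfl fun j hj => ?_
      obtain ⟨hjN, hjB⟩ := Finset.mem_sdiff.mp hj
      rw [deg_sdiff_of_notMem hGi (mem_nbhd.mp hjN).1 hjB]
    rw [h1, eq_sub_iff_add_eq, Finset.sum_sdiff_eq_sub hBN]
    ring
  rw [util, util, hsum, hdeg_i]
  ring

/-- A strictly profitable mixed deviation decomposes into a strictly profitable pure
addition or a strictly profitable pure deletion. -/
theorem mixed_deviation_decomposition (N : Finset V) (α : V → ℝ)
    (hα : ∀ i ∈ N, 0 ≤ α i) (i : V) (hi : i ∈ N)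
    (E F G : Finset (Sym2 V))
    (hFi : ∀ e ∈ F, i ∈ e) (hGi : ∀ e ∈ G, i ∈ e)
    (hGE : G ⊆ E) (hdisj : F ∩ (E ∪ G) = ∅)
    (h : util α E i < util α ((E ∪ F) \ G) i) :
    util α E i < util α (E ∪ F) i ∨ util α E i < util α (E \ G) i := by
  have hdisj' : Disjoint F (E ∪ G) := Finset.disjoint_iff_inter_eq_empty.mpr hdisj
  have hEF : Disjoint E F := (Finset.disjoint_union_right.mp hdisj').1.symm
  have hGF : Disjoint G F := (Finset.disjoint_union_right.mp hdisj').2.symm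
  have hGEF : G ⊆ E ∪ F := hGE.trans Finset.subset_union_left
  -- utility of the mixed deviation, via deletion from E ∪ F
  have hmix : util α ((E ∪ F) \ G) i =
      util α (E ∪ F) i - (∑ j ∈ nbhd G i, (deg E j : ℝ))
        + α i * ((nbhd G i).card : ℝ) := by
    rw [util_sdiff α (E ∪ F) G i hGi hGEF]
    congr 2
    refine Finset.sum_congr rfl fun j hj => ?_
    have hji : j ≠ i := (mem_nbhd.mp hj).1
    have hjA : j ∉ nbhd F i :=
      Finset.disjoint_left.mp (nbhd_disjoint_of_disjoint hGF) hj
    rw [deg_union_of_notMem hFi hji hjA]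
  have hdel := util_sdiff α E G i hGi hGE
  have hadd := util_union α E F i hFi hEF
  by_contra hcon
  push_neg at hcon
  rw [hmix, hadd] at h
  rw [hadd] at hcon
  rw [hdel] at hcon
  linarith [hcon.1, hcon.2]
end

section
/- If a coalition of players can weakly improve all its members by a joint deletion of edges (with at least one strict improvement), then some single player in the coalition can strictly improve her own utility by unilaterally deleting a single incident edge. -/
open Finset

variable {V : Type*} [Fintype V] [DecidableEq V]

lemma nbhd_subset_of_subset {E' E : Finset (Sym2 V)} (h : E' ⊆ E) (i : V) :
    nbhd E' i ⊆ nbhd E i := by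
  intro k hk
  simp only [nbhd, mem_filter, mem_univ, true_and] at hk ⊢
  exact ⟨hk.1, h hk.2⟩

lemma nbhd_sdiff_single {E : Finset (Sym2 V)} {i j : V} (hj : j ∈ nbhd E i) :
    nbhd (E \ {s(i, j)}) i = (nbhd E i).erase j := by
  simp only [nbhd, mem_filter, mem_univ, true_and] at hj
  ext k
  simp only [nbhd, mem_filter, mem_univ, true_and, Finset.mem_sdiff,
    Finset.mem_erase, Finset.mem_singleton, Sym2.congr_right]
  tauto

lemma deg_sdiff_single_of_ne {E : Finset (Sym2 V)} {i j : V} (k : V)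
    (hki : k ≠ i) (hkj : k ≠ j) : deg (E \ {s(i, j)}) k = deg E k := by
  unfold deg
  congr 1
  ext m
  simp only [nbhd, mem_filter, mem_univ, true_and, Finset.mem_sdiff,
    Finset.mem_singleton]
  constructor
  · rintro ⟨h1, h2, _⟩; exact ⟨h1, h2⟩
  · rintro ⟨h1, h2⟩
    refine ⟨h1, h2, fun he => ?_⟩
    rw [Sym2.eq_iff] at he
    rcases he with ⟨hk, _⟩ | ⟨hk, _⟩
    · exact hki hk
    · exact hkj hk

/-- Deleting a single edge `s(i,j)` changes `i`'s utility by exactly `α i - deg E j`. -/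
lemma util_delete_single (α : V → ℝ) {E : Finset (Sym2 V)} {i j : V}
    (hj : j ∈ nbhd E i) :
    util α (E \ {s(i, j)}) i = util α E i - (deg E j : ℝ) + α i := by
  have hji : j ≠ i := by
    simp only [nbhd, mem_filter, mem_univ, true_and] at hj; exact hj.1
  have hA : nbhd (E \ {s(i, j)}) i = (nbhd E i).erase j := nbhd_sdiff_single hj
  have hdegi : deg (E \ {s(i, j)}) i = deg E i - 1 := by
    unfold deg; rw [hA, Finset.card_erase_of_mem hj]
  have hpos : 1 ≤ deg E i := Finset.card_pos.mpr ⟨j, hj⟩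
  have hsum : ∑ k ∈ nbhd (E \ {s(i, j)}) i, (deg (E \ {s(i, j)}) k : ℝ)
      = (∑ k ∈ nbhd E i, (deg E k : ℝ)) - (deg E j : ℝ) := by
    rw [hA]
    have : ∀ k ∈ (nbhd E i).erase j,
        (deg (E \ {s(i, j)}) k : ℝ) = (deg E k : ℝ) := by
      intro k hk
      have hki : k ≠ i := by
        have := (Finset.mem_erase.mp hk).2
        simp only [nbhd, mem_filter, mem_univ, true_and] at this
        exact this.1
      rw [deg_sdiff_single_of_ne k hki (Finset.mem_erase.mp hk).1]
    rw [Finset.sum_congr rfl this, Finset.sum_erase_eq_sub hj]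
  unfold util
  rw [hsum, hdegi]
  have : ((deg E i - 1 : ℕ) : ℝ) = (deg E i : ℝ) - 1 := by
    push_cast [Nat.cast_sub hpos]; ring
  rw [this]; ring

/-- If `α i ≤ deg E j` for every neighbour `j` of `i` removed by the deletion,
then `i` cannot strictly profit from the deletion. -/
lemma util_sdiff_le (α : V → ℝ) {E F : Finset (Sym2 V)} {i : V}
    (H : ∀ j ∈ nbhd E i, j ∉ nbhd (E \ F) i → α i ≤ (deg E j : ℝ)) :
    util α (E \ F) i ≤ util α E i := by
  set E' := E \ F with hE'
  have hsub : E' ⊆ E := Finset.sdiff_subset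
  have hAB : nbhd E' i ⊆ nbhd E i := nbhd_subset_of_subset hsub i
  set A := nbhd E' i
  set B := nbhd E i
  have h1 : ∑ j ∈ A, (deg E' j : ℝ) ≤ ∑ j ∈ A, (deg E j : ℝ) :=
    Finset.sum_le_sum fun j _ => by
      exact_mod_cast Finset.card_le_card (nbhd_subset_of_subset hsub j)
  have h2 : (∑ j ∈ B \ A, (deg E j : ℝ)) + ∑ j ∈ A, (deg E j : ℝ)
      = ∑ j ∈ B, (deg E j : ℝ) := Finset.sum_sdiff hAB
  have h3 : α i * ((B \ A).card : ℝ) ≤ ∑ j ∈ B \ A, (deg E j : ℝ) := by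
    calc α i * ((B \ A).card : ℝ) = ∑ _j ∈ B \ A, α i := by
          rw [Finset.sum_const, nsmul_eq_mul]; ring
      _ ≤ ∑ j ∈ B \ A, (deg E j : ℝ) := Finset.sum_le_sum fun j hj => by
          have hj' := Finset.mem_sdiff.mp hj
          exact H j hj'.1 hj'.2
  have hcard : ((B \ A).card : ℝ) = (deg E i : ℝ) - (deg E' i : ℝ) := by
    have : (B \ A).card = B.card - A.card := Finset.card_sdiff_of_subset hAB
    have hle : A.card ≤ B.card := Finset.card_le_card hAB
    rw [this]
    push_cast [Nat.cast_sub hle]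
    rfl
  unfold util
  rw [hcard] at h3
  have := h1.trans (by linarith : ∑ j ∈ A, (deg E j : ℝ)
      ≤ ∑ j ∈ B, (deg E j : ℝ) - α i * ((deg E i : ℝ) - (deg E' i : ℝ)))
  show (∑ j ∈ A, (deg E' j : ℝ)) - α i * (deg E' i : ℝ)
      ≤ (∑ j ∈ B, (deg E j : ℝ)) - α i * (deg E i : ℝ)
  linarith

/-- If a coalition profits (all weakly, one strictly) from a joint deletion, some single
member strictly profits from unilaterally deleting a single incident edge. -/
theorem coalition_deletion_to_single_edge (N : Finset V) (α : V → ℝ)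
    (hα : ∀ i ∈ N, 0 ≤ α i) (S : Finset V) (hS : S ⊆ N)
    (E F : Finset (Sym2 V)) (hF : ∀ e ∈ F, e ∈ E ∧ ∃ i ∈ S, i ∈ e)
    (hweak : ∀ i ∈ S, util α E i ≤ util α (E \ F) i)
    (hstrict : ∃ i ∈ S, util α E i < util α (E \ F) i) :
    ∃ i ∈ S, ∃ e ∈ E, i ∈ e ∧ util α E i < util α (E \ {e}) i := by
  obtain ⟨i, hiS, hlt⟩ := hstrict
  by_contra hcon
  push_neg at hcon
  have H : ∀ j ∈ nbhd E i, j ∉ nbhd (E \ F) i → α i ≤ (deg E j : ℝ) := by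
    intro j hj _
    have hjE : s(i, j) ∈ E := by
      simp only [nbhd, mem_filter, mem_univ, true_and] at hj; exact hj.2
    have := hcon i hiS (s(i, j)) hjE (by simp)
    rw [util_delete_single α hj] at this
    linarith
  exact absurd (util_sdiff_le α H) (not_le.mpr hlt)
end

section
/- Utility monotonicity under edge inclusion in Nash stable graphs: if a Nash stable graph F = (V, E_F) strictly edge-includes a graph G = (V, E_G) (E_G ⊊ E_F), then u_i(E_F) ≥ u_i(E_G) for every player i ∈ N. -/
open Finset

variable {V : Type*} [Fintype V] [DecidableEq V]

/-- All unordered pairs of distinct vertices within `C`. -/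
def cliqueOn (C : Finset V) : Finset (Sym2 V) :=
  ((C ×ˢ C).filter fun p => p.1 ≠ p.2).image fun p => s(p.1, p.2)

/-- A deviation of the edge set that the coalition `P` of players (among the player
set `N`) can achieve on its own: each added edge is either between two coalition
members (mutual consent), or unilaterally from a coalition member to a non-player,
or between two non-player neighbours of a coalition member; each removed edge is
incident to a coalition member, or is an edge between two non-player neighbours of
a coalition member (a connection that the member sustained). -/
def CoalDev (N P : Finset V) (E E' : Finset (Sym2 V)) : Prop :=
  (∀ e ∈ E' \ E,
      (∃ i ∈ P, ∃ j ∈ P, i ≠ j ∧ e = s(i, j)) ∨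
      (∃ i ∈ P, ∃ j, j ∉ N ∧ j ≠ i ∧ e = s(i, j)) ∨
      (∃ i ∈ P, ∃ j k : V, j ∉ N ∧ k ∉ N ∧ j ≠ k ∧
        s(i, j) ∈ E' ∧ s(i, k) ∈ E' ∧ e = s(j, k))) ∧
  (∀ e ∈ E \ E',
      (∃ i ∈ P, i ∈ e) ∨
      (∃ i ∈ P, ∃ j k : V, j ∉ N ∧ k ∉ N ∧ j ≠ k ∧
        s(i, j) ∈ E ∧ s(i, k) ∈ E ∧ e = s(j, k)))

/-- Nash stability: no single player has a strictly profitable unilateral deviation. -/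
def NashStable (N : Finset V) (α : V → ℝ) (E : Finset (Sym2 V)) : Prop :=
  ∀ i ∈ N, ∀ E' : Finset (Sym2 V), CoalDev N {i} E E' → util α E' i ≤ util α E i

/-- Pairwise stability: any two unconnected players such that connecting would strictly
benefit one must have the other strictly losing from the connection. -/
def PairStable (N : Finset V) (α : V → ℝ) (E : Finset (Sym2 V)) : Prop :=
  ∀ i ∈ N, ∀ j ∈ N, i ≠ j → s(i, j) ∉ E →
    util α E i < util α (E ∪ {s(i, j)}) i → util α (E ∪ {s(i, j)}) j < util α E j

/-- Pairwise Nash stability. -/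
def PANS (N : Finset V) (α : V → ℝ) (E : Finset (Sym2 V)) : Prop :=
  NashStable N α E ∧ PairStable N α E

/-- Strength: no coalition of players has a deviation making all its members weakly
better off and at least one strictly better off. -/
def Strong (N : Finset V) (α : V → ℝ) (E : Finset (Sym2 V)) : Prop :=
  ∀ P ⊆ N, ∀ E' : Finset (Sym2 V), CoalDev N P E E' →
    ¬ ((∀ i ∈ P, util α E i ≤ util α E' i) ∧ ∃ i ∈ P, util α E i < util α E' i)

/-- Social welfare: the total utility of the players. -/
noncomputable def sw (N : Finset V) (α : V → ℝ) (E : Finset (Sym2 V)) : ℝ :=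
  ∑ i ∈ N, util α E i

/-- Utility monotonicity: a Nash stable graph strictly edge-including another graph
gives every player at least as much utility. -/
theorem utility_monotone_under_inclusion (N : Finset V) (α : V → ℝ)
    (hα : ∀ i ∈ N, 0 ≤ α i) (EF EG : Finset (Sym2 V))
    (hNS : NashStable N α EF) (hsub : EG ⊂ EF) :
    ∀ i ∈ N, util α EG i ≤ util α EF i := by
  classical
  intro i hi
  have hGsub : EG ⊆ EF := hsub.subset
  set E' : Finset (Sym2 V) := EF \ ((EF \ EG).filter fun e => i ∈ e) with hE'def
  have hE'mem : ∀ e, e ∈ E' ↔ e ∈ EF ∧ (i ∈ e → e ∈ EG) := by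
    intro e
    simp only [hE'def, Finset.mem_sdiff, Finset.mem_filter]
    tauto
  have hEGsubE' : EG ⊆ E' := by
    intro e he
    exact (hE'mem e).mpr ⟨hGsub he, fun _ => he⟩
  have hE'subEF : E' ⊆ EF := Finset.sdiff_subset
  have hdev : CoalDev N {i} EF E' := by
    constructor
    · intro e he
      rcases Finset.mem_sdiff.mp he with ⟨h1, h2⟩
      exact absurd (hE'subEF h1) h2
    · intro e he
      left
      refine ⟨i, Finset.mem_singleton_self i, ?_⟩
      rcases Finset.mem_sdiff.mp he with ⟨h1, h2⟩
      by_contra hie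
      exact h2 ((hE'mem e).mpr ⟨h1, fun h => absurd h hie⟩)
  have h1 : util α E' i ≤ util α EF i := hNS i hi E' hdev
  have hnb : nbhd E' i = nbhd EG i := by
    ext j
    simp only [nbhd, Finset.mem_filter, Finset.mem_univ, true_and]
    constructor
    · rintro ⟨hji, hm⟩
      exact ⟨hji, ((hE'mem _).mp hm).2 (Sym2.mem_mk_left i j)⟩
    · rintro ⟨hji, hm⟩
      exact ⟨hji, hEGsubE' hm⟩
  have hdegi : deg E' i = deg EG i := by
    simp [deg, hnb]
  have hdegj : ∀ j, (deg EG j : ℝ) ≤ deg E' j := by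
    intro j
    have : nbhd EG j ⊆ nbhd E' j := by
      intro x hx
      simp only [nbhd, Finset.mem_filter, Finset.mem_univ, true_and] at hx ⊢
      exact ⟨hx.1, hEGsubE' hx.2⟩
    exact_mod_cast Finset.card_le_card this
  have h2 : util α EG i ≤ util α E' i := by
    unfold util
    rw [hnb, hdegi]
    have hs : ∑ j ∈ nbhd EG i, (deg EG j : ℝ) ≤ ∑ j ∈ nbhd EG i, (deg E' j : ℝ) :=
      Finset.sum_le_sum fun j _ => hdegj j
    linarith
  linarith
end

section
/- Infinite price of stability example: with two players 1 and 2, no non-players, α_1 = 0 and α_2 = 1 + ε for some 0 < ε < 1, the only pairwise Nash stable graph is the empty graph with social welfare 0, while the graph with the single edge (1,2) achieves social welfare 1 − ε > 0; hence the price of stability is infinite. -/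
open Finset

variable {V : Type*} [Fintype V] [DecidableEq V]

/-- Infinite price of stability example: two players with `α_1 = 0`, `α_2 = 1 + ε`
(`0 < ε < 1`). The only pairwise Nash stable graph is empty, with social welfare `0`,
while the single-edge graph achieves social welfare `1 - ε > 0`. -/
theorem infinite_price_of_stability_example (ε : ℝ) (hε0 : 0 < ε) (hε1 : ε < 1)
    (α : Fin 2 → ℝ) (hα0 : α 0 = 0) (hα1 : α 1 = 1 + ε)
    (N : Finset (Fin 2)) (hN : N = Finset.univ) :
    (∀ E ⊆ cliqueOn (Finset.univ : Finset (Fin 2)),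
      (PANS N α E ↔ E = (∅ : Finset (Sym2 (Fin 2))))) ∧
    sw N α (∅ : Finset (Sym2 (Fin 2))) = 0 ∧
    sw N α (cliqueOn (Finset.univ : Finset (Fin 2))) = 1 - ε ∧
    0 < 1 - ε := by

  subst hN
  have hcl : cliqueOn (Finset.univ : Finset (Fin 2)) = {s((0:Fin 2), (1:Fin 2))} := by decide
  have hn0 : nbhd ({s((0:Fin 2), (1:Fin 2))}) 0 = {1} := by decide
  have hn1 : nbhd ({s((0:Fin 2), (1:Fin 2))}) 1 = {0} := by decide
  have hd0 : deg ({s((0:Fin 2), (1:Fin 2))}) 0 = 1 := by decide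
  have hd1 : deg ({s((0:Fin 2), (1:Fin 2))}) 1 = 1 := by decide
  have hne : nbhd (∅ : Finset (Sym2 (Fin 2))) = fun _ => ∅ := by
    funext i; simp [nbhd]
  have hu_empty : ∀ i, util α (∅ : Finset (Sym2 (Fin 2))) i = 0 := by
    intro i; simp [util, hne, deg]
  have hu0 : util α ({s((0:Fin 2), (1:Fin 2))}) 0 = 1 := by
    simp [util, hn0, hd0, hd1, hα0]
  have hu1 : util α ({s((0:Fin 2), (1:Fin 2))}) 1 = -ε := by
    simp [util, hn1, hd0, hd1, hα1]
  refine ⟨?_, ?_, ?_, by linarith⟩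
  · intro E hE
    rw [hcl] at hE
    rcases Finset.subset_singleton_iff.mp hE with rfl | rfl
    · constructor
      · intro _; rfl
      · intro _
        constructor
        · intro i _ E' hdev
          have hE' : E' = ∅ := by
            ext e
            simp only [Finset.notMem_empty, iff_false]
            intro he
            rcases hdev.1 e (by simpa using he) with ⟨a, ha, b, hb, hab, _⟩ | ⟨_, _, j, hj, _⟩ | ⟨_, _, j, _, hj, _⟩
            · simp only [Finset.mem_singleton] at ha hb; exact hab (ha.trans hb.symm)
            · exact hj (Finset.mem_univ j)
            · exact hj (Finset.mem_univ j)
          subst hE'; exact le_rfl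
        · intro i _ j _ hij _ hlt
          have hsw : s((1:Fin 2),(0:Fin 2)) = s((0:Fin 2),(1:Fin 2)) := Sym2.eq_swap
          fin_cases i <;> fin_cases j <;>
            simp only [Finset.empty_union, Fin.mk_zero, Fin.mk_one, hsw, hu_empty, hu0, hu1] at hlt ⊢ <;>
            first
            | exact absurd rfl hij
            | linarith
    · constructor
      · rintro ⟨hNash, -⟩
        exfalso
        have hdev : CoalDev Finset.univ {(1 : Fin 2)} ({s((0:Fin 2), (1:Fin 2))}) ∅ := by
          constructor
          · intro e he; simp at he
          · intro e he
            left
            refine ⟨1, Finset.mem_singleton_self _, ?_⟩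
            simp only [Finset.sdiff_empty, Finset.mem_singleton] at he
            subst he
            simp [Sym2.mem_iff]
        have := hNash 1 (Finset.mem_univ _) ∅ hdev
        rw [hu_empty, hu1] at this
        linarith
      · intro h; exact absurd h (by simp)
  · simp [sw, Fin.sum_univ_two, hu_empty]
  · rw [hcl]; simp [sw, Fin.sum_univ_two, hu0, hu1]; ring
end

section
/- Non-player interconnection condition in pairwise Nash equilibrium: if E results from a Nash equilibrium profile and some player i is adjacent to two distinct non-players j and k, then (j, k) ∈ E. -/
open Finset

variable {V : Type*} [Fintype V] [DecidableEq V]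

/-- In a Nash equilibrium graph, any two distinct non-player neighbours of a player
are themselves connected. -/
theorem nonplayer_neighbours_interconnected (N : Finset V) (α : V → ℝ)
    (hα : ∀ i ∈ N, 0 ≤ α i) (E : Finset (Sym2 V))
    (hNS : NashStable N α E)
    (i : V) (hi : i ∈ N) (j k : V) (hj : j ∉ N) (hk : k ∉ N) (hjk : j ≠ k)
    (hij : s(i, j) ∈ E) (hik : s(i, k) ∈ E) :
    s(j, k) ∈ E := by
  by_contra hjkE
  have hji : j ≠ i := fun h => hj (h ▸ hi)
  have hki : k ≠ i := fun h => hk (h ▸ hi)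
  set E' : Finset (Sym2 V) := E ∪ {s(j, k)} with hE'
  have hsub : E ⊆ E' := Finset.subset_union_left
  have hmono : ∀ v, nbhd E v ⊆ nbhd E' v := by
    intro v x hx
    simp only [nbhd, Finset.mem_filter] at hx ⊢
    exact ⟨hx.1, hx.2.1, hsub hx.2.2⟩
  have hdev : CoalDev N {i} E E' := by
    constructor
    · intro e he
      rw [Finset.mem_sdiff, Finset.mem_union, Finset.mem_singleton] at he
      have : e = s(j, k) := by tauto
      right; right
      exact ⟨i, Finset.mem_singleton_self i, j, k, hj, hk, hjk,
        hsub hij, hsub hik, this⟩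
    · intro e he
      rw [Finset.mem_sdiff] at he
      exact absurd (hsub he.1) he.2
  have hnbhdi : nbhd E' i = nbhd E i := by
    ext x
    simp only [nbhd, Finset.mem_filter, hE', Finset.mem_union, Finset.mem_singleton,
      Finset.mem_univ, true_and]
    constructor
    · rintro ⟨hxi, h | h⟩
      · exact ⟨hxi, h⟩
      · exfalso
        rw [Sym2.eq_iff] at h
        rcases h with ⟨h1, _⟩ | ⟨h1, _⟩
        · exact hji h1.symm
        · exact hki h1.symm
    · rintro ⟨hxi, h⟩; exact ⟨hxi, Or.inl h⟩
  have hjmem : j ∈ nbhd E i := by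
    simp only [nbhd, Finset.mem_filter, Finset.mem_univ, true_and]
    exact ⟨hji, hij⟩
  have hstrict : deg E j < deg E' j := by
    apply Finset.card_lt_card
    refine ⟨hmono j, fun hss => ?_⟩
    have hk' : k ∈ nbhd E' j := by
      simp only [nbhd, Finset.mem_filter, Finset.mem_univ, true_and, hE',
        Finset.mem_union, Finset.mem_singleton]
      exact ⟨fun h => hjk h.symm, Or.inr trivial⟩
    have := hss hk'
    simp only [nbhd, Finset.mem_filter] at this
    exact hjkE this.2.2
  have hsum : (∑ x ∈ nbhd E i, (deg E x : ℝ)) < ∑ x ∈ nbhd E i, (deg E' x : ℝ) := by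
    apply Finset.sum_lt_sum
    · intro x _
      exact_mod_cast Finset.card_le_card (hmono x)
    · exact ⟨j, hjmem, by exact_mod_cast hstrict⟩
  have hutil : util α E i < util α E' i := by
    unfold util
    rw [hnbhdi]
    have : deg E' i = deg E i := by unfold deg; rw [hnbhdi]
    rw [this]
    linarith
  exact absurd (hNS i hi E' hdev) (not_le.mpr hutil)
end
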